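/- Let A be a real m×n matrix, b ∈ ℝ^m, and assume V = {v ∈ ℝ^n : A v ≥ b} is nonempty and bounded. Let (x^i, c^i), i = 1,…,N, be data with x^i ∈ ℝ^K and c^i ∈ ℝ^n, and for ω ∈ ℝ^{n×K} define the pessimistic regret Regret(ω) = sup{(1/N) Σ_{i=1}^N (c^i · v^i − z*(c^i)) : v^i ∈ V*(ω x^i) for each i}. Then Regret(ω) ≥ 0 for every ω, and Regret(ω) = 0 if and only if V*(ω x^i) ⊆ V*(c^i) for every i = 1,…,N. -/

import Mathlib

/-! The regret is a supremum of averages of optimality gaps `c i ⬝ᵥ v - z*(c i)`, each of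
which is nonnegative on `V`; since `V` is compact, every `V*(ω x i)` is nonempty and the gaps
are bounded. Hence the supremum is nonnegative, and it vanishes exactly when every gap
vanishes on `V*(ω x i)`: otherwise a single positive gap, completed by arbitrary choices in the
other coordinates, gives a positive average. A vanishing gap at `v ∈ V` means `v ∈ V*(c i)`. -/

open Matrix Set BigOperators

noncomputable section

/-- The polyhedron `V = {v : A v ≥ b}` (inequalities entrywise). -/
def polyV {m n : ℕ} (A : Matrix (Fin m) (Fin n) ℝ) (b : Fin m → ℝ) : Set (Fin n → ℝ) :=
  {v | b ≤ A.mulVec v}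

/-- `z*(c)`: the optimal (infimum) value of `c · v` over `V`. -/
noncomputable def zstar {m n : ℕ} (A : Matrix (Fin m) (Fin n) ℝ) (b : Fin m → ℝ)
    (c : Fin n → ℝ) : ℝ :=
  sInf ((fun v => c ⬝ᵥ v) '' polyV A b)

/-- `V*(c)`: the set of optimal solutions of `min {c · v : v ∈ V}`. -/
def Vstar {m n : ℕ} (A : Matrix (Fin m) (Fin n) ℝ) (b : Fin m → ℝ)
    (c : Fin n → ℝ) : Set (Fin n → ℝ) :=
  {v ∈ polyV A b | c ⬝ᵥ v = zstar A b c}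

/-- The pessimistic regret of the linear model `ω`. -/
noncomputable def pessRegret {m n N K : ℕ} (A : Matrix (Fin m) (Fin n) ℝ) (b : Fin m → ℝ)
    (x : Fin N → Fin K → ℝ) (c : Fin N → Fin n → ℝ)
    (ω : Matrix (Fin n) (Fin K) ℝ) : ℝ :=
  sSup {r : ℝ | ∃ v : Fin N → Fin n → ℝ,
    (∀ i, v i ∈ Vstar A b (ω.mulVec (x i))) ∧
    r = (1 / (N : ℝ)) * ∑ i, (c i ⬝ᵥ v i - zstar A b (c i))}

section AverageValues

variable {α : Type*} {N : ℕ} (W : Fin N → Set α) (g : Fin N → α → ℝ)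

def averageValues : Set ℝ :=
  {r | ∃ v : Fin N → α, (∀ i, v i ∈ W i) ∧ r = 1 / (N : ℝ) * ∑ i, g i (v i)}

variable {W g}

lemma averageValues_nonempty (hW : ∀ i, (W i).Nonempty) : (averageValues W g).Nonempty := by
  choose w hw using hW
  exact ⟨_, w, hw, rfl⟩

lemma bddAbove_averageValues (hg : ∀ i, BddAbove (g i '' W i)) :
    BddAbove (averageValues W g) := by
  choose B hB using hg
  refine ⟨1 / (N : ℝ) * ∑ i, B i, ?_⟩
  rintro r ⟨v, hv, rfl⟩
  gcongr with i
  exact hB i ⟨v i, hv i, rfl⟩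

lemma nonneg_of_mem_averageValues (hg : ∀ i, ∀ v ∈ W i, 0 ≤ g i v) {r : ℝ}
    (hr : r ∈ averageValues W g) : 0 ≤ r := by
  obtain ⟨v, hv, rfl⟩ := hr
  exact mul_nonneg (by positivity) (Finset.sum_nonneg fun i _ => hg i _ (hv i))

lemma sSup_averageValues_nonneg (hW : ∀ i, (W i).Nonempty) (hbdd : ∀ i, BddAbove (g i '' W i))
    (hg : ∀ i, ∀ v ∈ W i, 0 ≤ g i v) : 0 ≤ sSup (averageValues W g) := by
  obtain ⟨r, hr⟩ := averageValues_nonempty (g := g) hW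
  exact (nonneg_of_mem_averageValues hg hr).trans (le_csSup (bddAbove_averageValues hbdd) hr)

lemma sSup_averageValues_eq_zero_iff (hW : ∀ i, (W i).Nonempty)
    (hbdd : ∀ i, BddAbove (g i '' W i)) (hg : ∀ i, ∀ v ∈ W i, 0 ≤ g i v) :
    sSup (averageValues W g) = 0 ↔ ∀ i, ∀ v ∈ W i, g i v = 0 := by
  constructor
  · intro hzero i v₀ hv₀
    choose w hw using hW
    set v := Function.update w i v₀
    have hv : ∀ j, v j ∈ W j := by
      intro j
      rcases eq_or_ne j i with rfl | hj
      · simpa [v] using hv₀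
      · simpa [v, Function.update_of_ne hj] using hw j
    have havg : 1 / (N : ℝ) * ∑ j, g j (v j) ≤ 0 :=
      hzero ▸ le_csSup (bddAbove_averageValues hbdd) ⟨v, hv, rfl⟩
    have hN : (0 : ℝ) < 1 / N := by
      have : 0 < N := Fin.pos i
      positivity
    refine le_antisymm ?_ (hg i v₀ hv₀)
    calc g i v₀ = g i (v i) := by simp [v]
      _ ≤ ∑ j, g j (v j) :=
        Finset.single_le_sum (fun j _ => hg j _ (hv j)) (Finset.mem_univ i)
      _ ≤ 0 := nonpos_of_mul_nonpos_right havg hN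
  · intro hzero
    refine le_antisymm (csSup_le (averageValues_nonempty hW) ?_)
      (sSup_averageValues_nonneg hW hbdd hg)
    rintro r ⟨v, hv, rfl⟩
    simp [fun i => hzero i (v i) (hv i)]

end AverageValues

section LinearProgram

variable {m n : ℕ} {A : Matrix (Fin m) (Fin n) ℝ} {b : Fin m → ℝ}

lemma isClosed_polyV (A : Matrix (Fin m) (Fin n) ℝ) (b : Fin m → ℝ) : IsClosed (polyV A b) :=
  isClosed_le continuous_const (continuous_const.matrix_mulVec continuous_id)

lemma isCompact_polyV (hbd : Bornology.IsBounded (polyV A b)) : IsCompact (polyV A b) :=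
  Metric.isCompact_of_isClosed_isBounded (isClosed_polyV A b) hbd

lemma zstar_le_dotProduct (hbd : Bornology.IsBounded (polyV A b)) (c : Fin n → ℝ)
    {v : Fin n → ℝ} (hv : v ∈ polyV A b) : zstar A b c ≤ c ⬝ᵥ v :=
  csInf_le ((isCompact_polyV hbd).bddBelow_image
    (continuous_const.dotProduct continuous_id).continuousOn) ⟨v, hv, rfl⟩

lemma Vstar_nonempty (hne : (polyV A b).Nonempty) (hbd : Bornology.IsBounded (polyV A b))
    (c : Fin n → ℝ) : (Vstar A b c).Nonempty := by
  obtain ⟨v, hv, hmin⟩ := (isCompact_polyV hbd).exists_isMinOn hne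
    (continuous_const.dotProduct continuous_id).continuousOn
  refine ⟨v, hv, le_antisymm ?_ (zstar_le_dotProduct hbd c hv)⟩
  refine le_csInf (hne.image _) ?_
  rintro r ⟨u, hu, rfl⟩
  exact hmin hu

lemma bddAbove_optimalityGap (hbd : Bornology.IsBounded (polyV A b)) (c : Fin n → ℝ) :
    BddAbove ((fun v => c ⬝ᵥ v - zstar A b c) '' polyV A b) :=
  (isCompact_polyV hbd).bddAbove_image
    ((continuous_const.dotProduct continuous_id).sub continuous_const).continuousOn

lemma mem_Vstar_iff_optimalityGap_eq_zero (c : Fin n → ℝ) {v : Fin n → ℝ}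
    (hv : v ∈ polyV A b) : v ∈ Vstar A b c ↔ c ⬝ᵥ v - zstar A b c = 0 := by
  rw [sub_eq_zero]
  exact and_iff_right hv

end LinearProgram

theorem stmt_16 (m n N K : ℕ)
    (A : Matrix (Fin m) (Fin n) ℝ) (b : Fin m → ℝ)
    (hne : (polyV A b).Nonempty) (hbd : Bornology.IsBounded (polyV A b))
    (x : Fin N → Fin K → ℝ) (c : Fin N → Fin n → ℝ) :
    ∀ ω : Matrix (Fin n) (Fin K) ℝ,
      0 ≤ pessRegret A b x c ω ∧
      (pessRegret A b x c ω = 0 ↔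
        ∀ i, Vstar A b (ω.mulVec (x i)) ⊆ Vstar A b (c i)) := by
  intro ω
  have hreg : pessRegret A b x c ω = sSup (averageValues (fun i => Vstar A b (ω *ᵥ x i))
      (fun i v => c i ⬝ᵥ v - zstar A b (c i))) := rfl
  have hW : ∀ i, (Vstar A b (ω *ᵥ x i)).Nonempty := fun i => Vstar_nonempty hne hbd _
  have hbdd : ∀ i, BddAbove ((fun v => c i ⬝ᵥ v - zstar A b (c i)) '' Vstar A b (ω *ᵥ x i)) :=
    fun i => (bddAbove_optimalityGap hbd (c i)).mono (image_mono fun _ hv => hv.1)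
  have hgap : ∀ i, ∀ v ∈ Vstar A b (ω *ᵥ x i), 0 ≤ c i ⬝ᵥ v - zstar A b (c i) :=
    fun i v hv => sub_nonneg.mpr (zstar_le_dotProduct hbd (c i) hv.1)
  rw [hreg, sSup_averageValues_eq_zero_iff hW hbdd hgap]
  refine ⟨sSup_averageValues_nonneg hW hbdd hgap, forall_congr' fun i => ?_⟩
  exact forall₂_congr fun v hv => (mem_Vstar_iff_optimalityGap_eq_zero (c i) hv.1).symm
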